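/- arXiv:2311.17527 — 4 statements merged into one kernel-verified Lean document; each statement's English description precedes it below -/
import Mathlib

section
/- Let σ be an automorphism of F_q of order m, let λ ∈ F_q^* satisfy σ(λ) = λ, and let n be a positive integer with gcd(m, n) = 1. If C ⊆ F_q^n is a skew (σ,λ)-constacyclic code, then C is a λ-constacyclic code, i.e., T_λ(c) ∈ C for every c ∈ C. -/
/-- The skew constacyclic shift `T_{σ,λ}` on `F^n`:
`T_{σ,λ}(c)_0 = λ·σ(c_{n−1})` and `T_{σ,λ}(c)_i = σ(c_{i−1})` for `1 ≤ i ≤ n−1`.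
(Here `i - 1` is subtraction in `Fin n`, so `0 - 1 = n - 1`.) -/
def skewShift {F : Type*} [Field F] {n : ℕ} [NeZero n] (σ : F → F) (lam : F)
    (c : Fin n → F) : Fin n → F :=
  fun i => if i = 0 then lam * σ (c (i - 1)) else σ (c (i - 1))

/-!
Write `S = T_λ` and `T = T_{σ,λ}`. Since `σ` fixes `λ`, applying `σ` coordinatewise commutes
with `S`, and `T = S ∘ σ`; hence `T^k c = S^k (σ^k c)`. Moreover `S^n = λ • id`. By
`gcd(m, n) = 1` there is `t` with `m ∣ n t + 1`, so `σ^(nt+1) = 1` and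
`T^(nt+1) c = S^(nt+1) c = λ^t • S c`. As `C` is `T`-stable and `λ ≠ 0`, `S c ∈ C`.
-/

open Fin.NatCast

section Shift

variable {F : Type*} [Field F] {n : ℕ} [NeZero n]

lemma skewShift_id_apply (lam : F) (c : Fin n → F) (i : Fin n) :
    skewShift id lam c i = (if i = 0 then lam else 1) * c (i - 1) := by
  simp only [skewShift, id_eq]
  split_ifs <;> simp

lemma skewShift_id_comp {G : Type*} [FunLike G F F] [MulHomClass G F F] (σ : G) {lam : F}
    (hfix : σ lam = lam) (c : Fin n → F) :
    skewShift id lam (σ ∘ c) = σ ∘ skewShift id lam c := by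
  funext i
  simp only [skewShift, id_eq, Function.comp_apply]
  split_ifs <;> simp [hfix]

lemma skewShift_iterate (σ : F ≃+* F) {lam : F} (hfix : σ lam = lam) (k : ℕ) (c : Fin n → F) :
    (skewShift σ lam)^[k] c = (skewShift id lam)^[k] (⇑(σ ^ k) ∘ c) := by
  have hcomm : Function.Commute (skewShift id lam) (fun c : Fin n → F => σ ∘ c) :=
    fun c => skewShift_id_comp σ hfix c
  have hcomp : (fun c : Fin n → F => σ ∘ c)^[k] c = ⇑(σ ^ k) ∘ c := by
    induction k with
    | zero => rfl
    | succ k ih => rw [Function.iterate_succ_apply', ih, RingAut.coe_pow, RingAut.coe_pow,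
        Function.iterate_succ']; rfl
  rw [show skewShift (⇑σ) lam = skewShift id lam ∘ fun c => σ ∘ c from rfl,
    hcomm.comp_iterate, Function.comp_apply, hcomp]

lemma skewShift_id_iterate_apply (lam : F) (c : Fin n → F) {j : ℕ} (hj : j ≤ n) (i : Fin n) :
    (skewShift id lam)^[j] c i = (if (i : ℕ) < j then lam else 1) * c (i - j) := by
  obtain ⟨N, rfl⟩ : ∃ N, n = N + 1 := Nat.exists_eq_add_one.mpr (NeZero.pos n)
  induction j generalizing i with
  | zero => simp
  | succ j ih =>
    have hsub : i - 1 - (j : Fin (N + 1)) = i - ((j + 1 : ℕ) : Fin (N + 1)) := by push_cast; abel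
    rw [Function.iterate_succ_apply', skewShift_id_apply, ih (by omega), ← mul_assoc, hsub]
    congr 1
    by_cases hi : i = 0
    · simp [hi, show ¬ N < j by omega]
    · have hprev : ((i - 1 : Fin (N + 1)) : ℕ) = i - 1 := by rw [Fin.coe_sub_one, if_neg hi]
      have hpos : (i : ℕ) ≠ 0 := Fin.val_ne_iff.mpr hi
      simp only [hi, if_false, one_mul, hprev, show (i : ℕ) - 1 < j ↔ (i : ℕ) < j + 1 by omega]

lemma skewShift_id_iterate_self (lam : F) :
    (skewShift id lam)^[n] = fun c : Fin n → F => lam • c := by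
  funext c i
  simp [skewShift_id_iterate_apply lam c le_rfl i]

lemma skewShift_id_iterate_mul_add_one (lam : F) (t : ℕ) (c : Fin n → F) :
    (skewShift id lam)^[n * t + 1] c = lam ^ t • skewShift id lam c := by
  rw [Function.iterate_succ_apply, Function.iterate_mul, skewShift_id_iterate_self, smul_iterate]

end Shift

lemma Nat.exists_dvd_mul_add_one {m n : ℕ} (hmn : Nat.gcd m n = 1) (hm : m ≠ 0) :
    ∃ t, m ∣ n * t + 1 := by
  have : NeZero m := ⟨hm⟩
  let u := ZMod.unitOfCoprime n (Nat.coprime_comm.mp hmn)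
  refine ⟨(-(↑u⁻¹ : ZMod m)).val, ?_⟩
  rw [← ZMod.natCast_eq_zero_iff]
  push_cast
  rw [ZMod.natCast_zmod_val, mul_neg, show (n : ZMod m) = u from rfl, Units.mul_inv]
  ring

theorem stmt_6_general (F : Type*) [Field F]
    (σ : F ≃+* F) (m : ℕ) (hm : orderOf σ = m)
    (lam : F) (hlam : lam ≠ 0) (hfix : σ lam = lam)
    (n : ℕ) [NeZero n] (hmn : Nat.gcd m n = 1)
    (C : Submodule F (Fin n → F))
    (hC : ∀ c ∈ C, skewShift (⇑σ) lam c ∈ C) :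
    ∀ c ∈ C, skewShift (id : F → F) lam c ∈ C := by
  intro c hc
  obtain rfl | hm0 := eq_or_ne m 0
  · obtain rfl : n = 1 := by simpa using hmn
    rw [← Function.iterate_one (skewShift id lam), skewShift_id_iterate_self]
    exact C.smul_mem lam hc
  obtain ⟨t, ht⟩ := Nat.exists_dvd_mul_add_one hmn hm0
  have hσ : σ ^ (n * t + 1) = 1 := orderOf_dvd_iff_pow_eq_one.mp (hm ▸ ht)
  have hmem := C.smul_mem (lam ^ t)⁻¹ (Set.MapsTo.iterate (fun c hc => hC c hc) (n * t + 1) hc)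
  rwa [skewShift_iterate σ hfix, hσ, RingAut.coe_one, Function.id_comp,
    skewShift_id_iterate_mul_add_one, smul_smul, inv_mul_cancel₀ (pow_ne_zero t hlam),
    one_smul] at hmem

/-- Let `σ` be an automorphism of `F_q` of order `m`, let `λ ∈ F_q^*`
with `σ(λ) = λ`, and let `n` be a positive integer with `gcd(m, n) = 1`.
If `C ⊆ F_q^n` is a skew `(σ,λ)`-constacyclic code, then `C` is a
`λ`-constacyclic code, i.e. `T_λ(c) ∈ C` for every `c ∈ C`. -/
theorem stmt_6 (F : Type*) [Field F] [Fintype F]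
    (σ : F ≃+* F) (m : ℕ) (hm : orderOf σ = m)
    (lam : F) (hlam : lam ≠ 0) (hfix : σ lam = lam)
    (n : ℕ) [NeZero n] (hmn : Nat.gcd m n = 1)
    (C : Submodule F (Fin n → F))
    (hC : ∀ c ∈ C, skewShift (⇑σ) lam c ∈ C) :
    ∀ c ∈ C, skewShift (id : F → F) lam c ∈ C :=
  stmt_6_general F σ m hm lam hlam hfix n hmn C hC
end

section
/- Let λ, μ ∈ F_q^* and α ∈ F_q^* with μ = λ·α^([n]_s). Then for every c ∈ F_q^n one has the intertwining identity D_α(T_{σ,μ}(c)) = α · T_{σ,λ}(D_α(c)). -/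
/-- The diagonal map `D_α : F^n → F^n`, `(D_α(c))_i = α^([i]_s)·c_i`,
where `[i]_s = ∑_{j<i} p^(s·j)`. -/
def diagMap (p s : ℕ) {F : Type*} [Field F] {n : ℕ} (α : F) (c : Fin n → F) :
    Fin n → F :=
  fun i => α ^ (∑ j ∈ Finset.range (i : ℕ), p ^ (s * j)) * c i


lemma sum_succ_aux (p s k : ℕ) :
    ∑ j ∈ Finset.range (k + 1), p ^ (s * j) =
      1 + p ^ s * ∑ j ∈ Finset.range k, p ^ (s * j) := by
  rw [Finset.sum_range_succ']
  simp [Finset.mul_sum, pow_add, pow_mul, mul_comm, Nat.mul_succ]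
  ring

/-- Let `λ, μ, α ∈ F_q^*` with `μ = λ·α^([n]_s)`, and let
`σ : a ↦ a^(p^s)`. Then for every `c ∈ F_q^n` one has the intertwining identity
`D_α(T_{σ,μ}(c)) = α · T_{σ,λ}(D_α(c))`. -/
theorem stmt_8 (p r s n : ℕ) (hp : p.Prime) (hr : 1 ≤ r) (hs : s < r) [NeZero n]
    (F : Type*) [Field F] [Fintype F] (hF : Fintype.card F = p ^ r)
    (lam mu α : F) (hlam : lam ≠ 0) (hmu : mu ≠ 0) (hα : α ≠ 0)
    (h : mu = lam * α ^ (∑ j ∈ Finset.range n, p ^ (s * j))) :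
    ∀ c : Fin n → F,
      diagMap p s α (skewShift (fun a : F => a ^ p ^ s) mu c) =
        α • skewShift (fun a : F => a ^ p ^ s) lam (diagMap p s α c) := by
  obtain ⟨m, rfl⟩ := Nat.exists_eq_succ_of_ne_zero (NeZero.ne n)
  intro c
  funext i
  by_cases hi : i = 0
  · subst hi
    have hv : ((0 - 1 : Fin (m + 1)) : ℕ) = m := by
      rw [Fin.coe_sub_one]; simp
    simp only [diagMap, skewShift, Pi.smul_apply, smul_eq_mul, if_pos rfl, ite_true, hv, Nat.succ_eq_add_one,
      Fin.val_zero, Finset.range_zero, Finset.sum_empty, pow_zero, one_mul, h,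
      sum_succ_aux p s m, mul_pow, ← pow_mul]
    ring
  · have hv : ((i - 1 : Fin (m + 1)) : ℕ) = (i : ℕ) - 1 := by
      rw [Fin.coe_sub_one, if_neg hi]
    obtain ⟨k, hk⟩ : ∃ k, (i : ℕ) = k + 1 :=
      Nat.exists_eq_succ_of_ne_zero (fun h0 => hi (Fin.ext h0))
    simp only [diagMap, skewShift, Pi.smul_apply, smul_eq_mul, if_neg hi, hv, hk,
      Nat.add_sub_cancel, sum_succ_aux p s k, mul_pow, ← pow_mul]
    ring
end

section
/- Let λ, μ ∈ F_q^* and α ∈ F_q^* with λ·α^([n]_s) = μ. If C ⊆ F_q^n is a skew (σ,μ)-constacyclic code, then its image D_α(C) = {D_α(c) : c ∈ C} is a skew (σ,λ)-constacyclic code; moreover D_α is a bijective F_q-linear map that preserves the Hamming weight, i.e., wt(D_α(c)) = wt(c) for all c ∈ F_q^n. In particular, skew (σ,μ)-constacyclic codes of length n and skew (σ,λ)-constacyclic codes of length n are equivalent via a Hamming-weight-preserving linear bijection. -/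
open Finset

section
variable {F : Type*} [Field F] (p s : ℕ)

lemma pow_geom_sum_succ (α : F) (k : ℕ) :
    α ^ (∑ j ∈ range (k + 1), p ^ (s * j))
      = α * (α ^ ∑ j ∈ range k, p ^ (s * j)) ^ p ^ s := by
  simp only [pow_mul]
  rw [geom_sum_succ]
  ring

lemma diagMap_skewShift {n : ℕ} [NeZero n] {lam mu α : F}
    (h : lam * α ^ (∑ j ∈ range n, p ^ (s * j)) = mu) (c : Fin n → F) :
    diagMap p s α (skewShift (· ^ p ^ s) mu c)
      = α • skewShift (· ^ p ^ s) lam (diagMap p s α c) := by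
  obtain ⟨m, rfl⟩ : ∃ m, n = m + 1 := Nat.exists_eq_succ_of_ne_zero (NeZero.ne n)
  funext i
  simp only [diagMap, skewShift, Pi.smul_apply, smul_eq_mul, mul_pow]
  by_cases hi : i = 0
  · have hpred : ((i - 1 : Fin (m + 1)) : ℕ) = m := by simp [hi]
    rw [if_pos hi, if_pos hi, hpred, ← h, pow_geom_sum_succ, hi]
    simp only [Fin.val_zero, range_zero, sum_empty, pow_zero, one_mul]
    ring
  · have hsucc : (i : ℕ) = ((i - 1 : Fin (m + 1)) : ℕ) + 1 := by
      rw [Fin.coe_sub_one, if_neg hi]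
      have : (i : ℕ) ≠ 0 := Fin.val_ne_zero_iff.mpr hi
      omega
    rw [if_neg hi, if_neg hi, hsucc, pow_geom_sum_succ]
    ring

lemma diagMap_inv_diagMap {n : ℕ} {α : F} (hα : α ≠ 0) (c : Fin n → F) :
    diagMap p s α⁻¹ (diagMap p s α c) = c := by
  funext i
  simp only [diagMap, inv_pow]
  exact inv_mul_cancel_left₀ (pow_ne_zero _ hα) _

def diagLinearEquiv (n : ℕ) {α : F} (hα : α ≠ 0) : (Fin n → F) ≃ₗ[F] (Fin n → F) where
  toFun := diagMap p s α
  invFun := diagMap p s α⁻¹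
  map_add' x y := funext fun i => mul_add _ (x i) (y i)
  map_smul' a x := funext fun i => mul_left_comm _ a (x i)
  left_inv := diagMap_inv_diagMap p s hα
  right_inv c := by simpa using diagMap_inv_diagMap p s (inv_ne_zero hα) c

@[simp]
lemma coe_diagLinearEquiv (n : ℕ) {α : F} (hα : α ≠ 0) :
    ⇑(diagLinearEquiv p s n hα) = diagMap p s α := rfl

lemma skewShift_diagLinearEquiv {n : ℕ} [NeZero n] {lam mu α : F} (hα : α ≠ 0)
    (h : lam * α ^ (∑ j ∈ range n, p ^ (s * j)) = mu) (c : Fin n → F) :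
    skewShift (· ^ p ^ s) lam (diagLinearEquiv p s n hα c)
      = α⁻¹ • diagLinearEquiv p s n hα (skewShift (· ^ p ^ s) mu c) := by
  rw [coe_diagLinearEquiv, diagMap_skewShift p s h, inv_smul_smul₀ hα]

lemma hammingNorm_diagMap [DecidableEq F] {n : ℕ} {α : F} (hα : α ≠ 0) (c : Fin n → F) :
    hammingNorm (diagMap p s α c) = hammingNorm c := by
  simp [hammingNorm, diagMap, hα]

end

theorem stmt_9_general (p s n : ℕ) [NeZero n]
    (F : Type*) [Field F] [DecidableEq F]
    (lam mu α : F) (hα : α ≠ 0)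
    (h : lam * α ^ (∑ j ∈ Finset.range n, p ^ (s * j)) = mu)
    (C : Submodule F (Fin n → F))
    (hC : ∀ c ∈ C, skewShift (fun a : F => a ^ p ^ s) mu c ∈ C) :
    (∃ C' : Submodule F (Fin n → F),
        (C' : Set (Fin n → F)) = diagMap p s α '' (C : Set (Fin n → F)) ∧
        ∀ c ∈ C', skewShift (fun a : F => a ^ p ^ s) lam c ∈ C') ∧
    Function.Bijective (diagMap p s α (n := n)) ∧
    IsLinearMap F (diagMap p s α (n := n)) ∧
    ∀ c : Fin n → F, hammingNorm (diagMap p s α c) = hammingNorm c := by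
  let D := diagLinearEquiv p s n hα
  refine ⟨⟨C.map D.toLinearMap, Submodule.map_coe _ _, ?_⟩, D.bijective, D.toLinearMap.isLinear,
    hammingNorm_diagMap p s hα⟩
  rintro _ ⟨c, hc, rfl⟩
  rw [LinearEquiv.coe_coe, skewShift_diagLinearEquiv p s hα h]
  exact Submodule.smul_mem _ _ (Submodule.mem_map_of_mem (hC c hc))

/-- Let `λ, μ, α ∈ F_q^*` with `λ·α^([n]_s) = μ` and `σ : a ↦ a^(p^s)`.
If `C ⊆ F_q^n` is a skew `(σ,μ)`-constacyclic code, then `D_α(C)` is a skew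
`(σ,λ)`-constacyclic code; moreover `D_α` is a bijective `F_q`-linear map
preserving the Hamming weight. In particular, skew `(σ,μ)`-constacyclic codes and
skew `(σ,λ)`-constacyclic codes of length `n` are equivalent via a
Hamming-weight-preserving linear bijection. -/
theorem stmt_9 (p r s n : ℕ) (hp : p.Prime) (hr : 1 ≤ r) (hs : s < r) [NeZero n]
    (F : Type*) [Field F] [Fintype F] [DecidableEq F] (hF : Fintype.card F = p ^ r)
    (lam mu α : F) (hlam : lam ≠ 0) (hmu : mu ≠ 0) (hα : α ≠ 0)
    (h : lam * α ^ (∑ j ∈ Finset.range n, p ^ (s * j)) = mu)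
    (C : Submodule F (Fin n → F))
    (hC : ∀ c ∈ C, skewShift (fun a : F => a ^ p ^ s) mu c ∈ C) :
    (∃ C' : Submodule F (Fin n → F),
        (C' : Set (Fin n → F)) = diagMap p s α '' (C : Set (Fin n → F)) ∧
        ∀ c ∈ C', skewShift (fun a : F => a ^ p ^ s) lam c ∈ C') ∧
    Function.Bijective (diagMap p s α (n := n)) ∧
    IsLinearMap F (diagMap p s α (n := n)) ∧
    ∀ c : Fin n → F, hammingNorm (diagMap p s α c) = hammingNorm c :=
  stmt_9_general p s n F lam mu α hα h C hC
end

section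
/- Let q = 2^r, let σ be the Frobenius automorphism of F_q (σ(a) = a²), let λ ∈ F_q^*, and let n be a positive integer with gcd(n, r) = 1. If C ⊆ F_q^n is a skew (σ,λ)-constacyclic code of length n, then C is equivalent to a cyclic code: there exists β ∈ F_q^* with β^(2^n − 1) = λ such that the image D_β(C) = {D_β(c) : c ∈ C} is a cyclic code, i.e., invariant under the cyclic shift T_1. -/
/-- The diagonal map `D_β : F^n → F^n` for `q = 2^r` and Frobenius `σ`:
`(D_β(c))_i = β^(2^i − 1)·c_i` (note `2^i − 1 = ∑_{j<i} 2^j`). -/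
def diagMapFrob {F : Type*} [Field F] {n : ℕ} (β : F) (c : Fin n → F) :
    Fin n → F :=
  fun i => β ^ (2 ^ (i : ℕ) - 1) * c i

open Fin.NatCast

lemma exists_ne_zero_pow_eq_of_coprime {F : Type*} [Field F] [Fintype F] {k : ℕ}
    (hk : (Fintype.card F - 1).Coprime k) {a : F} (ha : a ≠ 0) :
    ∃ b : F, b ≠ 0 ∧ b ^ k = a := by
  classical
  have hcard : (Nat.card Fˣ).Coprime k := by
    rwa [Nat.card_eq_fintype_card, Fintype.card_units]
  refine ⟨((powCoprime hcard).symm (Units.mk0 a ha) : Fˣ), Units.ne_zero _, ?_⟩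
  rw [← Units.val_pow_eq_pow_val, ← powCoprime_apply hcard, Equiv.apply_symm_apply,
    Units.val_mk0]

lemma mul_sq_pow_two_pow_sub_one {M : Type*} [Monoid M] (β : M) (t : ℕ) :
    β * (β ^ (2 ^ t - 1)) ^ 2 = β ^ (2 ^ (t + 1) - 1) := by
  have h : 2 ^ (t + 1) - 1 = 1 + (2 ^ t - 1) * 2 := by
    have := @Nat.one_le_two_pow t
    rw [pow_succ]; omega
  rw [h, pow_add, pow_one, pow_mul]

lemma Fin.val_sub_one_add_one {n : ℕ} [NeZero n] (i : Fin n) :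
    ((i - 1 : Fin n) : ℕ) + 1 = if i = 0 then n else i := by
  obtain ⟨m, rfl⟩ := Nat.exists_eq_succ_of_ne_zero (NeZero.ne n)
  rw [Fin.coe_sub_one]
  split_ifs with hi
  · rfl
  · have := Fin.val_ne_zero_iff.mpr hi
    omega

section SkewShift

variable {F : Type*} [Field F] {n : ℕ} [NeZero n]

lemma skewShift_one_apply (σ : F → F) (c : Fin n → F) (i : Fin n) :
    skewShift σ 1 c i = σ (c (i - 1)) := by
  simp [skewShift]

lemma skewShift_one_iterate_apply (σ : F → F) (k : ℕ) (c : Fin n → F) (i : Fin n) :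
    (skewShift σ 1)^[k] c i = σ^[k] (c (i - k)) := by
  induction k generalizing i with
  | zero => simp
  | succ k ih =>
    rw [Function.iterate_succ_apply', skewShift_one_apply, ih, Function.iterate_succ_apply',
      sub_sub, Nat.cast_succ, add_comm (k : Fin n)]

lemma skewShift_one_iterate_eq_cyclicShift {σ : F → F} {M : ℕ} (hσ : σ^[M] = id)
    (hM : M % n = 1 % n) :
    (skewShift (n := n) σ 1)^[M] = skewShift (id : F → F) (1 : F) := by
  have hMcast : (M : Fin n) = 1 := Fin.ext (by simpa using hM)
  funext c i
  rw [skewShift_one_iterate_apply, hσ, hMcast, skewShift_one_apply]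

lemma diagMapFrob_skewShift {β lam : F} (hβ : β ^ (2 ^ n - 1) = lam) (c : Fin n → F) :
    diagMapFrob β (skewShift (· ^ 2) lam c) = β • skewShift (· ^ 2) 1 (diagMapFrob β c) := by
  funext i
  have hshift : β * (β ^ (2 ^ ((i - 1 : Fin n) : ℕ) - 1) * c (i - 1)) ^ 2
      = β ^ (2 ^ (if i = 0 then n else (i : ℕ)) - 1) * c (i - 1) ^ 2 := by
    rw [mul_pow, ← mul_assoc, mul_sq_pow_two_pow_sub_one, Fin.val_sub_one_add_one]
  simp only [Pi.smul_apply, smul_eq_mul, skewShift_one_apply, diagMapFrob, hshift]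
  by_cases hi : i = 0
  · simp [skewShift, hi, hβ]
  · simp [skewShift, hi]

variable (n) in
def diagMapFrobLinear (β : F) : (Fin n → F) →ₗ[F] (Fin n → F) where
  toFun := diagMapFrob β
  map_add' x y := by funext i; simp [diagMapFrob, mul_add]
  map_smul' a x := by funext i; simp [diagMapFrob, mul_left_comm]

lemma mapsTo_skewShift_map_diagMapFrobLinear {β lam : F} (hβ0 : β ≠ 0)
    (hβ : β ^ (2 ^ n - 1) = lam) {C : Submodule F (Fin n → F)}
    (hC : Set.MapsTo (skewShift (· ^ 2) lam) (C : Set (Fin n → F)) C) :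
    Set.MapsTo (skewShift (· ^ 2) 1) (C.map (diagMapFrobLinear n β) : Set (Fin n → F))
      (C.map (diagMapFrobLinear n β)) := by
  rintro _ ⟨c, hc, rfl⟩
  have h : skewShift (· ^ 2) 1 (diagMapFrob β c)
      = β⁻¹ • diagMapFrobLinear n β (skewShift (· ^ 2) lam c) := by
    rw [diagMapFrobLinear, LinearMap.coe_mk, AddHom.coe_mk, diagMapFrob_skewShift hβ,
      inv_smul_smul₀ hβ0]
  exact h ▸ Submodule.smul_mem _ _ (Submodule.mem_map_of_mem (hC hc))

end SkewShift

theorem stmt_13_general (r : ℕ)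
    (F : Type*) [Field F] [Fintype F] (hF : Fintype.card F = 2 ^ r)
    (n : ℕ) [NeZero n] (hnr : Nat.gcd n r = 1)
    (lam : F) (hlam : lam ≠ 0)
    (C : Submodule F (Fin n → F))
    (hC : ∀ c ∈ C, skewShift (fun a : F => a ^ 2) lam c ∈ C) :
    ∃ β : F, β ≠ 0 ∧ β ^ (2 ^ n - 1) = lam ∧
      ∃ C' : Submodule F (Fin n → F),
        (C' : Set (Fin n → F)) = diagMapFrob β '' (C : Set (Fin n → F)) ∧
        ∀ c ∈ C', skewShift (id : F → F) (1 : F) c ∈ C' := by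
  have hcop : (Fintype.card F - 1).Coprime (2 ^ n - 1) := by
    rw [hF, Nat.Coprime, Nat.pow_sub_one_gcd_pow_sub_one, Nat.gcd_comm, hnr, pow_one]
  obtain ⟨β, hβ0, hβ⟩ := exists_ne_zero_pow_eq_of_coprime hcop hlam
  refine ⟨β, hβ0, hβ, C.map (diagMapFrobLinear n β), Submodule.map_coe _ _, ?_⟩
  obtain ⟨m, -, hm⟩ :=
    Nat.exists_mul_mod_eq_of_coprime 1 (Nat.coprime_comm.mp hnr) (NeZero.ne n)
  have hfrob : (fun a : F => a ^ 2)^[r * m] = id := by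
    funext a
    rw [pow_iterate, pow_mul, ← hF]
    exact FiniteField.pow_card_pow m a
  intro c hc
  rw [← skewShift_one_iterate_eq_cyclicShift hfrob hm]
  exact (mapsTo_skewShift_map_diagMapFrobLinear hβ0 hβ hC).iterate _ hc

/-- Let `q = 2^r`, `σ` the Frobenius automorphism of `F_q`
(`σ(a) = a²`), `λ ∈ F_q^*`, and `n` a positive integer with `gcd(n, r) = 1`.
If `C ⊆ F_q^n` is a skew `(σ,λ)`-constacyclic code, then `C` is equivalent to a
cyclic code: there is `β ∈ F_q^*` with `β^(2^n − 1) = λ` such that `D_β(C)` is a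
cyclic code, i.e. invariant under the cyclic shift `T_1`. -/
theorem stmt_13 (r : ℕ) (hr : 1 ≤ r)
    (F : Type*) [Field F] [Fintype F] (hF : Fintype.card F = 2 ^ r)
    (n : ℕ) [NeZero n] (hnr : Nat.gcd n r = 1)
    (lam : F) (hlam : lam ≠ 0)
    (C : Submodule F (Fin n → F))
    (hC : ∀ c ∈ C, skewShift (fun a : F => a ^ 2) lam c ∈ C) :
    ∃ β : F, β ≠ 0 ∧ β ^ (2 ^ n - 1) = lam ∧
      ∃ C' : Submodule F (Fin n → F),
        (C' : Set (Fin n → F)) = diagMapFrob β '' (C : Set (Fin n → F)) ∧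
        ∀ c ∈ C', skewShift (id : F → F) (1 : F) c ∈ C' :=
  stmt_13_general r F hF n hnr lam hlam C hC
end
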